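/- Let E be a real inner product space and let U and V be finite-dimensional subspaces of E with U ∩ V = {0}. Then there exists a constant γ with 0 ≤ γ < 1 such that for all u ∈ U and all v ∈ V, |⟨u, v⟩| ≤ γ‖u‖‖v‖. -/

import Mathlib

open scoped RealInnerProductSpace

/-!
Let `P` be the orthogonal projection onto `V`. For `v ∈ V` we have `⟪u, v⟫ = ⟪P u, v⟫`, so
`|⟪u, v⟫| ≤ ‖P u‖ ‖v‖`, and it suffices to show that `P` restricted to `U` has operator norm
`γ < 1`. Since `U ∩ V = 0`, every nonzero `u ∈ U` lies outside `V` and is therefore strictly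
shortened by `P`; on the compact unit sphere of the finite-dimensional space `U` this strict
inequality becomes a uniform one.
-/

theorem ContinuousLinearMap.opNorm_lt_one_of_norm_apply_lt {𝕜 E F : Type*} [RCLike 𝕜]
    [NormedAddCommGroup E] [NormedSpace 𝕜 E] [FiniteDimensional 𝕜 E]
    [SeminormedAddCommGroup F] [NormedSpace 𝕜 F]
    (f : E →L[𝕜] F) (hf : ∀ x ≠ 0, ‖f x‖ < ‖x‖) : ‖f‖ < 1 := by
  cases subsingleton_or_nontrivial E
  · simp [f.opNorm_subsingleton]
  have : ProperSpace E := FiniteDimensional.proper_rclike 𝕜 E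
  have : NormedSpace ℝ E := NormedSpace.restrictScalars ℝ 𝕜 E
  have himage : IsCompact ((fun x => ‖f x‖) '' Metric.sphere 0 1) :=
    (isCompact_sphere 0 1).image (by fun_prop)
  obtain ⟨x, hx, hfx⟩ :=
    himage.sSup_mem ((NormedSpace.sphere_nonempty.mpr zero_le_one).image _)
  have hx1 : ‖x‖ = 1 := mem_sphere_zero_iff_norm.mp hx
  rw [f.sSup_sphere_eq_norm] at hfx
  rw [← hfx, ← hx1]
  exact hf x (ne_zero_of_norm_ne_zero (hx1.symm ▸ one_ne_zero))

theorem Submodule.norm_starProjection_lt_of_notMem {𝕜 E : Type*} [RCLike 𝕜]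
    [NormedAddCommGroup E] [InnerProductSpace 𝕜 E] (K : Submodule 𝕜 E)
    [K.HasOrthogonalProjection] {v : E} (hv : v ∉ K) : ‖K.starProjection v‖ < ‖v‖ :=
  (K.norm_starProjection_apply_le v).lt_of_ne fun h => hv ((K.mem_iff_norm_starProjection v).mpr h)

/-- Strengthened Cauchy–Schwarz inequality: if `U` and `V` are finite-dimensional
subspaces of a real inner product space with trivial intersection, then there is a
constant `0 ≤ γ < 1` with `|⟪u, v⟫| ≤ γ‖u‖‖v‖` for all `u ∈ U`, `v ∈ V`. -/
theorem strengthened_cauchy_schwarz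
    {E : Type*} [NormedAddCommGroup E] [InnerProductSpace ℝ E]
    (U V : Submodule ℝ E) [FiniteDimensional ℝ U] [FiniteDimensional ℝ V]
    (hUV : U ⊓ V = ⊥) :
    ∃ γ : ℝ, 0 ≤ γ ∧ γ < 1 ∧
      ∀ u ∈ U, ∀ v ∈ V, |⟪u, v⟫| ≤ γ * ‖u‖ * ‖v‖ := by
  set T : U →L[ℝ] E := V.starProjection ∘L U.subtypeL
  have hT : ‖T‖ < 1 := by
    refine T.opNorm_lt_one_of_norm_apply_lt fun u hu => V.norm_starProjection_lt_of_notMem ?_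
    intro huV
    have hmem : (u : E) ∈ U ⊓ V := ⟨u.2, huV⟩
    rw [hUV, Submodule.mem_bot] at hmem
    exact hu (Subtype.ext hmem)
  refine ⟨‖T‖, norm_nonneg T, hT, fun u hu v hv => ?_⟩
  have hinner : ⟪u, v⟫ = ⟪V.starProjection u, v⟫ := by
    rw [V.inner_starProjection_left_eq_right, V.starProjection_eq_self_iff.mpr hv]
  calc |⟪u, v⟫| ≤ ‖V.starProjection u‖ * ‖v‖ := hinner ▸ abs_real_inner_le_norm _ _
    _ = ‖T ⟨u, hu⟩‖ * ‖v‖ := rfl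
    _ ≤ ‖T‖ * ‖u‖ * ‖v‖ := by gcongr; exact T.le_opNorm ⟨u, hu⟩
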